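/- Plan existence is invariant under bisimulation: if epistemic states s1 and s2 are bisimilar, then for any finite set of epistemic actions A and goal formula φ, there exists a sequence α ∈ A* with s1 × α defined and s1 × α ⊨ φ if and only if there exists such a sequence for s2. -/

import Mathlib

/-- Modal formulas over a set of agents, atoms indexed by ℕ. -/
inductive Form (Agent : Type) : Type
  | falsum : Form Agent
  | atom : ℕ → Form Agent
  | neg : Form Agent → Form Agent
  | conj : Form Agent → Form Agent → Form Agent
  | know : Agent → Form Agent → Form Agent

/-- A Kripke model: accessibility relations and valuation. -/
structure KripkeModel (Agent : Type) (W : Type) where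
  R : Agent → W → W → Prop
  V : W → ℕ → Prop

/-- Satisfaction of a modal formula at a world. -/
def KripkeModel.sat {Agent W : Type} (M : KripkeModel Agent W) : W → Form Agent → Prop
  | _, .falsum => False
  | w, .atom p => M.V w p
  | w, .neg φ => ¬ M.sat w φ
  | w, .conj φ ψ => M.sat w φ ∧ M.sat w ψ
  | w, .know i φ => ∀ v, M.R i w v → M.sat v φ

/-- An event model: pointedless Kripke frame with preconditions on events. -/
structure EventModel (Agent : Type) (E : Type) where
  Q : Agent → E → E → Prop
  pre : E → Form Agent

/-- The product update of a Kripke model with an event model: worlds are the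
pairs surviving the preconditions, accessibility is componentwise, valuation
is inherited. -/
def productModel {Agent W E : Type} (M : KripkeModel Agent W) (A : EventModel Agent E) :
    KripkeModel Agent {p : W × E // M.sat p.1 (A.pre p.2)} where
  R i x y := M.R i x.1.1 y.1.1 ∧ A.Q i x.1.2 y.1.2
  V x n := M.V x.1.1 n

/-- An epistemic state: a pointed Kripke model. -/
structure EpiState (Agent : Type) where
  W : Type
  M : KripkeModel Agent W
  w : W

/-- An epistemic action: a pointed event model. -/
structure EpiAction (Agent : Type) where
  E : Type
  A : EventModel Agent E
  e : E

/-- An action applies to a state when the designated event's precondition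
holds at the designated world. -/
def EpiAction.applies {Agent : Type} (a : EpiAction Agent) (s : EpiState Agent) : Prop :=
  s.M.sat s.w (a.A.pre a.e)

/-- The product update of an epistemic state by an applicable epistemic action. -/
def EpiState.update {Agent : Type} (s : EpiState Agent) (a : EpiAction Agent) (h : a.applies s) :
    EpiState Agent where
  W := {p : s.W × a.E // s.M.sat p.1 (a.A.pre p.2)}
  M := productModel s.M a.A
  w := ⟨(s.w, a.e), h⟩

/-- `Exec s α t` : the sequence of actions `α` applies (left to right) to `s`
and results in `t`. -/
inductive Exec {Agent : Type} : EpiState Agent → List (EpiAction Agent) → EpiState Agent → Prop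
  | nil (s : EpiState Agent) : Exec s [] s
  | snoc {s t : EpiState Agent} {α : List (EpiAction Agent)} (a : EpiAction Agent)
      (hst : Exec s α t) (h : a.applies t) : Exec s (α ++ [a]) (t.update a h)

/-- `Z` is a bisimulation between `M` and `M'`. -/
def Bisim {Agent W W' : Type} (M : KripkeModel Agent W) (M' : KripkeModel Agent W')
    (Z : W → W' → Prop) : Prop :=
  ∀ w w', Z w w' →
    (∀ p, M.V w p ↔ M'.V w' p) ∧
    (∀ i v, M.R i w v → ∃ v', M'.R i w' v' ∧ Z v v') ∧
    (∀ i v', M'.R i w' v' → ∃ v, M.R i w v ∧ Z v v')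

/-- Two pointed models are bisimilar. -/
def Bisimilar {Agent : Type} (s t : EpiState Agent) : Prop :=
  ∃ Z : s.W → t.W → Prop, Bisim s.M t.M Z ∧ Z s.w t.w

/-- A formula is propositional (modal depth 0). -/
def Form.IsProp {Agent : Type} : Form Agent → Prop
  | .falsum => True
  | .atom _ => True
  | .neg φ => φ.IsProp
  | .conj φ ψ => φ.IsProp ∧ ψ.IsProp
  | .know _ _ => False

/-- Modal depth of a formula. -/
def Form.depth {Agent : Type} : Form Agent → ℕ
  | .falsum => 0
  | .atom _ => 0
  | .neg φ => φ.depth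
  | .conj φ ψ => max φ.depth ψ.depth
  | .know _ φ => φ.depth + 1

/-- The submodel of a state induced by a set of worlds containing the point. -/
def EpiState.sub {Agent : Type} (s : EpiState Agent) (S : Set s.W) (h : s.w ∈ S) : EpiState Agent where
  W := S
  M := { R := fun i x y => s.M.R i x.1 y.1, V := fun x n => s.M.V x.1 n }
  w := ⟨s.w, h⟩

/-! Bisimulation preserves modal truth, so an action applicable on one side is applicable on the
other; pairing the bisimulation with equality of events makes it a bisimulation of the product
updates. By induction along the plan, a plan for `s` is executable from `t` and ends in a state
bisimilar to the one it reaches from `s`, which therefore satisfies the same goal. -/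

section

variable {Agent : Type}

theorem KripkeModel.sat_iff_of_bisim {W W' : Type} {M : KripkeModel Agent W}
    {M' : KripkeModel Agent W'} {Z : W → W' → Prop} (hZ : Bisim M M' Z) (φ : Form Agent)
    {w : W} {w' : W'} (hw : Z w w') : M.sat w φ ↔ M'.sat w' φ := by
  induction φ generalizing w w' with
  | falsum => rfl
  | atom p => exact (hZ w w' hw).1 p
  | neg φ ih => exact not_congr (ih hw)
  | conj φ ψ ihφ ihψ => exact and_congr (ihφ hw) (ihψ hw)
  | know i φ ih =>
    obtain ⟨-, forth, back⟩ := hZ w w' hw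
    constructor
    · intro h v' hv'
      obtain ⟨v, hv, hvv'⟩ := back i v' hv'
      exact (ih hvv').mp (h v hv)
    · intro h v hv
      obtain ⟨v', hv', hvv'⟩ := forth i v hv
      exact (ih hvv').mpr (h v' hv')

theorem Bisim.symm {W W' : Type} {M : KripkeModel Agent W} {M' : KripkeModel Agent W'}
    {Z : W → W' → Prop} (hZ : Bisim M M' Z) : Bisim M' M (flip Z) := fun w' w hw =>
  let ⟨atoms, forth, back⟩ := hZ w w' hw
  ⟨fun p => (atoms p).symm, back, forth⟩

theorem Bisim.product {W W' E : Type} {M : KripkeModel Agent W}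
    {M' : KripkeModel Agent W'} {Z : W → W' → Prop} (hZ : Bisim M M' Z) (A : EventModel Agent E) :
    Bisim (productModel M A) (productModel M' A) (fun x y => Z x.1.1 y.1.1 ∧ x.1.2 = y.1.2) := by
  rintro ⟨⟨w, e⟩, _⟩ ⟨⟨w', _⟩, _⟩ ⟨hw, rfl⟩
  obtain ⟨atoms, forth, back⟩ := hZ w w' hw
  refine ⟨atoms, ?_, ?_⟩
  · rintro i ⟨⟨v, f⟩, hv⟩ ⟨hR, hQ⟩
    obtain ⟨v', hR', hvv'⟩ := forth i v hR
    exact ⟨⟨(v', f), (KripkeModel.sat_iff_of_bisim hZ _ hvv').mp hv⟩, ⟨hR', hQ⟩, hvv', rfl⟩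
  · rintro i ⟨⟨v', f⟩, hv'⟩ ⟨hR', hQ⟩
    obtain ⟨v, hR, hvv'⟩ := back i v' hR'
    exact ⟨⟨(v, f), (KripkeModel.sat_iff_of_bisim hZ _ hvv').mpr hv'⟩, ⟨hR, hQ⟩, hvv', rfl⟩

theorem Bisimilar.symm {s t : EpiState Agent} (h : Bisimilar s t) : Bisimilar t s :=
  let ⟨Z, hZ, hst⟩ := h
  ⟨flip Z, hZ.symm, hst⟩

theorem Bisimilar.sat_iff {s t : EpiState Agent} (h : Bisimilar s t) (φ : Form Agent) :
    s.M.sat s.w φ ↔ t.M.sat t.w φ :=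
  let ⟨_, hZ, hst⟩ := h
  KripkeModel.sat_iff_of_bisim hZ φ hst

theorem Bisimilar.applies {s t : EpiState Agent} (h : Bisimilar s t) {a : EpiAction Agent}
    (hs : a.applies s) : a.applies t :=
  (h.sat_iff _).mp hs

theorem Bisimilar.update {s t : EpiState Agent} (h : Bisimilar s t) {a : EpiAction Agent}
    (hs : a.applies s) : Bisimilar (s.update a hs) (t.update a (h.applies hs)) :=
  let ⟨_, hZ, hst⟩ := h
  ⟨_, hZ.product a.A, hst, rfl⟩

theorem Exec.exists_bisimilar {s u : EpiState Agent} {α : List (EpiAction Agent)}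
    (hsu : Exec s α u) {t : EpiState Agent} (hst : Bisimilar s t) :
    ∃ v, Exec t α v ∧ Bisimilar u v := by
  induction hsu with
  | nil => exact ⟨t, .nil t, hst⟩
  | snoc a _ ha ih =>
    obtain ⟨v, htv, huv⟩ := ih
    exact ⟨_, .snoc a htv (huv.applies ha), huv.update ha⟩

def HasPlan (s : EpiState Agent) (acts : List (EpiAction Agent)) (φ : Form Agent) : Prop :=
  ∃ (α : List (EpiAction Agent)) (u : EpiState Agent),
    (∀ a ∈ α, a ∈ acts) ∧ Exec s α u ∧ u.M.sat u.w φ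

theorem Bisimilar.hasPlan {s t : EpiState Agent} (hst : Bisimilar s t)
    {acts : List (EpiAction Agent)} {φ : Form Agent} (hs : HasPlan s acts φ) :
    HasPlan t acts φ :=
  let ⟨α, _, hα, hsu, hu⟩ := hs
  let ⟨v, htv, huv⟩ := hsu.exists_bisimilar hst
  ⟨α, v, hα, htv, (huv.sat_iff φ).mp hu⟩

end

/-- Plan existence is invariant under bisimulation. -/
theorem plan_existence_bisim_invariant {Agent : Type} (s t : EpiState Agent)
    (hb : Bisimilar s t) (acts : List (EpiAction Agent)) (φ : Form Agent) :
    (∃ (α : List (EpiAction Agent)) (u : EpiState Agent),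
        (∀ a ∈ α, a ∈ acts) ∧ Exec s α u ∧ u.M.sat u.w φ) ↔
    (∃ (α : List (EpiAction Agent)) (u : EpiState Agent),
        (∀ a ∈ α, a ∈ acts) ∧ Exec t α u ∧ u.M.sat u.w φ) :=
  ⟨hb.hasPlan, hb.symm.hasPlan⟩
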